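/- arXiv:1705.09750 — 2 statements merged into one kernel-verified Lean document; each statement's English description precedes it below -/
import Mathlib

section
/- If U and V are antichains of A* with the Higman ordering, then the concatenation UV is an antichain, and the map (x,y) ↦ xy from U × V to UV is a bijection; in particular |UV| = |U|·|V| when U and V are finite. -/
/-- The Higman (subword) ordering on words over an ordered alphabet `A`. -/
def Hig {A : Type*} [PartialOrder A] (u v : List A) : Prop :=
  List.SublistForall₂ (· ≤ ·) u v

/-- Elementwise concatenation of languages. -/
def conc {A : Type*} (X Y : Set (List A)) : Set (List A) :=
  Set.image2 (· ++ ·) X Y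

/-- A final segment (upward closed set) of `A*` for the Higman ordering. -/
def IsFinal {A : Type*} [PartialOrder A] (F : Set (List A)) : Prop :=
  ∀ ⦃a b : List A⦄, Hig a b → a ∈ F → b ∈ F

/-- Upward closure of a set of words. -/
def upset {A : Type*} [PartialOrder A] (X : Set (List A)) : Set (List A) :=
  {b | ∃ a ∈ X, Hig a b}

/-- The set of minimal elements of a set of words. -/
def minSet {A : Type*} [PartialOrder A] (X : Set (List A)) : Set (List A) :=
  {x | x ∈ X ∧ ∀ y ∈ X, Hig y x → y = x}

/-- An antichain of words for the Higman ordering. -/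
def IsAnti {A : Type*} [PartialOrder A] (U : Set (List A)) : Prop :=
  ∀ x ∈ U, ∀ y ∈ U, x ≠ y → ¬ Hig x y

section Aux

variable {A : Type*} [PartialOrder A]

lemma hig_refl (u : List A) : Hig u u :=
  List.sublistForall₂_iff.2 ⟨u, List.forall₂_refl u, List.Sublist.refl u⟩

lemma hig_trans {u v w : List A} (h1 : Hig u v) (h2 : Hig v w) : Hig u w :=
  List.SublistForall₂.is_trans.trans u v w h1 h2

lemma hig_of_sublist {u v : List A} (h : List.Sublist u v) : Hig u v :=
  List.sublistForall₂_iff.2 ⟨u, List.forall₂_refl u, h⟩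

lemma hig_length_le {u v : List A} (h : Hig u v) : u.length ≤ v.length := by
  obtain ⟨l, h1, h2⟩ := List.sublistForall₂_iff.1 h
  rw [h1.length_eq]
  exact h2.length_le

lemma hig_append_split {u1 u2 v : List A} (h : Hig (u1 ++ u2) v) :
    ∃ v1 v2, v = v1 ++ v2 ∧ Hig u1 v1 ∧ Hig u2 v2 := by
  obtain ⟨l, h1, h2⟩ := List.sublistForall₂_iff.1 h
  have hf := h1.flip
  have ht := (List.forall₂_take_append l u1 u2 hf).flip
  have hd := (List.forall₂_drop_append l u1 u2 hf).flip
  have hl : l.take u1.length ++ l.drop u1.length = l := List.take_append_drop _ _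
  rw [← hl] at h2
  obtain ⟨v1, v2, rfl, hs1, hs2⟩ := List.append_sublist_iff.1 h2
  exact ⟨v1, v2, rfl,
    List.sublistForall₂_iff.2 ⟨_, ht, hs1⟩,
    List.sublistForall₂_iff.2 ⟨_, hd, hs2⟩⟩

lemma key {U V : Set (List A)} (hU : IsAnti U) (hV : IsAnti V)
    {x1 y1 x2 y2 : List A} (hx1 : x1 ∈ U) (hy1 : y1 ∈ V) (hx2 : x2 ∈ U) (hy2 : y2 ∈ V)
    (h : Hig (x1 ++ y1) (x2 ++ y2)) : x1 = x2 ∧ y1 = y2 := by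
  obtain ⟨v1, v2, heq, h1, h2⟩ := hig_append_split h
  rcases List.append_eq_append_iff.1 heq.symm with ⟨a, ha1, ha2⟩ | ⟨c, hc1, hc2⟩
  · -- x2 = v1 ++ a, v2 = a ++ y2
    have hx : Hig x1 x2 := by
      refine hig_trans h1 (hig_of_sublist ?_)
      rw [ha1]
      exact List.sublist_append_left v1 a
    have hxe : x1 = x2 := by
      by_contra hne
      exact hU x1 hx1 x2 hx2 hne hx
    have hlen : v1.length + a.length = x1.length := by
      rw [hxe, ha1, List.length_append]
    have ha : a = [] := by
      have := hig_length_le h1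
      have : a.length = 0 := by omega
      exact List.length_eq_zero_iff.1 this
    subst ha
    simp only [List.append_nil, List.nil_append] at ha1 ha2
    rw [ha2] at h2
    have hy : y1 = y2 := by
      by_contra hne
      exact hV y1 hy1 y2 hy2 hne h2
    exact ⟨hxe, hy⟩
  · -- v1 = x2 ++ c, y2 = c ++ v2
    have hy : Hig y1 y2 := by
      refine hig_trans h2 (hig_of_sublist ?_)
      rw [hc2]
      exact List.sublist_append_right c v2
    have hye : y1 = y2 := by
      by_contra hne
      exact hV y1 hy1 y2 hy2 hne hy
    have hlen : c.length + v2.length = y1.length := by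
      rw [hye, hc2, List.length_append]
    have hc : c = [] := by
      have := hig_length_le h2
      have : c.length = 0 := by omega
      exact List.length_eq_zero_iff.1 this
    subst hc
    simp only [List.append_nil, List.nil_append] at hc1 hc2
    rw [hc1] at h1
    have hx : x1 = x2 := by
      by_contra hne
      exact hU x1 hx1 x2 hx2 hne h1
    exact ⟨hx, hye⟩

end Aux

theorem stmt8 {A : Type*} [PartialOrder A] (U V : Set (List A))
    (hU : IsAnti U) (hV : IsAnti V) :
    IsAnti (conc U V) ∧
    Set.BijOn (fun p : List A × List A => p.1 ++ p.2) (U ×ˢ V) (conc U V) ∧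
    (U.Finite → V.Finite → (conc U V).ncard = U.ncard * V.ncard) := by
  have hanti : IsAnti (conc U V) := by
    rintro _ ⟨x1, hx1, y1, hy1, rfl⟩ _ ⟨x2, hx2, y2, hy2, rfl⟩ hne h
    obtain ⟨h1, h2⟩ := key hU hV hx1 hy1 hx2 hy2 h
    exact hne (by rw [h1, h2])
  have hinj : Set.InjOn (fun p : List A × List A => p.1 ++ p.2) (U ×ˢ V) := by
    rintro ⟨x1, y1⟩ ⟨hx1, hy1⟩ ⟨x2, y2⟩ ⟨hx2, hy2⟩ h
    simp only at h
    obtain ⟨h1, h2⟩ := key hU hV hx1 hy1 hx2 hy2 (h ▸ hig_refl (x1 ++ y1))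
    exact Prod.ext h1 h2
  have himg : (fun p : List A × List A => p.1 ++ p.2) '' (U ×ˢ V) = conc U V := by
    ext w
    constructor
    · rintro ⟨⟨x, y⟩, ⟨hx, hy⟩, rfl⟩
      exact ⟨x, hx, y, hy, rfl⟩
    · rintro ⟨x, hx, y, hy, rfl⟩
      exact ⟨⟨x, y⟩, ⟨hx, hy⟩, rfl⟩
  have hbij : Set.BijOn (fun p : List A × List A => p.1 ++ p.2) (U ×ˢ V) (conc U V) := by
    refine ⟨?_, hinj, ?_⟩
    · rintro ⟨x, y⟩ ⟨hx, hy⟩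
      exact ⟨x, hx, y, hy, rfl⟩
    · rintro w hw
      have := himg
      rw [this]
      exact hw
  refine ⟨hanti, hbij, fun hUf hVf => ?_⟩
  rw [← himg, Set.ncard_image_of_injOn hinj,
    ← Nat.card_coe_set_eq, ← Nat.card_coe_set_eq, ← Nat.card_coe_set_eq,
    Nat.card_congr (Equiv.Set.prod U V), Nat.card_prod]
end

section
/- Let A be an ordered alphabet. The monoid Ant°(A*) of non-empty antichains of A* under concatenation is a free monoid; likewise the monoid of non-empty finite antichains is free. -/
/-- An irreducible member of the monoid of antichains. -/
def IrredAnti {A : Type*} [PartialOrder A] (U : Set (List A)) : Prop :=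
  U ≠ ({([] : List A)} : Set (List A)) ∧
    ∀ X Y : Set (List A), IsAnti X → IsAnti Y → U = conc X Y → U = X ∨ U = Y

/-- An irreducible member of the monoid of finite antichains. -/
def IrredFinAnti {A : Type*} [PartialOrder A] (U : Set (List A)) : Prop :=
  U ≠ ({([] : List A)} : Set (List A)) ∧
    ∀ X Y : Set (List A), IsAnti X → X.Finite → IsAnti Y → Y.Finite →
      U = conc X Y → U = X ∨ U = Y

open scoped List

namespace Hig

variable {A : Type*} [PartialOrder A] {u v w : List A}

theorem trans (h₁ : Hig u v) (h₂ : Hig v w) : Hig u w :=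
  trans_of (List.SublistForall₂ (· ≤ ·)) h₁ h₂

theorem of_sublist (h : u <+ v) : Hig u v :=
  h.sublistForall₂

theorem length_le (h : Hig u v) : u.length ≤ v.length := by
  obtain ⟨l, hl, hlv⟩ := List.sublistForall₂_iff.mp h
  exact hl.length_eq ▸ hlv.length_le

theorem append_left (u : List A) (h : Hig v w) : Hig (u ++ v) (u ++ w) := by
  induction u with
  | nil => exact h
  | cons a u ih => exact .cons le_rfl ih

theorem exists_append_of_append (h : Hig (u ++ v) w) :
    ∃ w₁ w₂, w = w₁ ++ w₂ ∧ Hig u w₁ ∧ Hig v w₂ := by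
  obtain ⟨l, hl, hlw⟩ := List.sublistForall₂_iff.mp h
  have hu := List.forall₂_take u.length hl
  have hv := List.forall₂_drop u.length hl
  rw [List.take_left] at hu
  rw [List.drop_left] at hv
  obtain ⟨w₁, w₂, rfl, h₁, h₂⟩ :=
    List.append_sublist_iff.mp ((List.take_append_drop u.length l).symm ▸ hlw)
  exact ⟨w₁, w₂, rfl, List.sublistForall₂_iff.mpr ⟨_, hu, h₁⟩,
    List.sublistForall₂_iff.mpr ⟨_, hv, h₂⟩⟩

end Hig

section Conc

variable {α : Type*} {X Y : Set (List α)}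

theorem append_mem_conc {x y : List α} (hx : x ∈ X) (hy : y ∈ Y) : x ++ y ∈ conc X Y :=
  Set.mem_image2_of_mem hx hy

theorem conc_assoc (X Y Z : Set (List α)) : conc (conc X Y) Z = conc X (conc Y Z) :=
  Set.image2_assoc List.append_assoc

@[simp]
theorem singleton_nil_conc (X : Set (List α)) : conc {[]} X = X := by
  simp [conc]

@[simp]
theorem conc_singleton_nil (X : Set (List α)) : conc X {[]} = X := by
  simp [conc]

theorem foldr_conc_append (l₁ l₂ : List (Set (List α))) :
    (l₁ ++ l₂).foldr conc {[]} = conc (l₁.foldr conc {[]}) (l₂.foldr conc {[]}) := by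
  induction l₁ with
  | nil => simp
  | cons G l ih => rw [List.cons_append, List.foldr_cons, List.foldr_cons, ih, conc_assoc]

theorem Set.Nonempty.conc (hX : X.Nonempty) (hY : Y.Nonempty) : (conc X Y).Nonempty :=
  hX.image2 hY

theorem nonempty_foldr_conc {l : List (Set (List α))} (h : ∀ G ∈ l, G.Nonempty) :
    (l.foldr conc {[]}).Nonempty := by
  induction l with
  | nil => exact Set.singleton_nonempty _
  | cons G l ih =>
    rw [List.forall_mem_cons] at h
    exact h.1.conc (ih h.2)

theorem Set.Finite.of_conc_left (hX : X.Nonempty) (h : (conc X Y).Finite) : Y.Finite := by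
  obtain ⟨x, hx⟩ := hX
  exact (h.preimage (List.append_right_injective x).injOn).subset
    fun y hy => append_mem_conc hx hy

end Conc

section MinLength

variable {α : Type*} {X Y : Set (List α)}

/-- Junk value `0` on the empty set. -/
noncomputable def minLength (X : Set (List α)) : ℕ :=
  sInf (List.length '' X)

theorem minLength_le {x : List α} (hx : x ∈ X) : minLength X ≤ x.length :=
  Nat.sInf_le ⟨x, hx, rfl⟩

theorem exists_length_eq_minLength (hX : X.Nonempty) : ∃ x ∈ X, x.length = minLength X :=
  Nat.sInf_mem (hX.image _)

@[simp]
theorem minLength_singleton_nil : minLength ({[]} : Set (List α)) = 0 := by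
  simp [minLength]

theorem minLength_conc (hX : X.Nonempty) (hY : Y.Nonempty) :
    minLength (conc X Y) = minLength X + minLength Y := by
  obtain ⟨x, hx, hxl⟩ := exists_length_eq_minLength hX
  obtain ⟨y, hy, hyl⟩ := exists_length_eq_minLength hY
  obtain ⟨_, ⟨x', hx', y', hy', rfl⟩, hl⟩ := exists_length_eq_minLength (hX.conc hY)
  have := minLength_le (append_mem_conc hx hy)
  have := minLength_le hx'
  have := minLength_le hy'
  simp only [List.length_append] at *
  omega

end MinLength

theorem List.prefix_or_prefix_of_append_eq_append {α : Type*} {x₁ x₂ y₁ y₂ : List α}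
    (h : x₁ ++ y₁ = x₂ ++ y₂) : x₁ <+: x₂ ∨ x₂ <+: x₁ :=
  List.prefix_or_prefix_of_prefix (List.prefix_append x₁ y₁) (h ▸ List.prefix_append x₂ y₂)

theorem List.suffix_or_suffix_of_append_eq_append {α : Type*} {x₁ x₂ y₁ y₂ : List α}
    (h : x₁ ++ y₁ = x₂ ++ y₂) : y₁ <:+ y₂ ∨ y₂ <:+ y₁ :=
  List.suffix_or_suffix_of_suffix (List.suffix_append x₁ y₁) (h ▸ List.suffix_append x₂ y₂)

namespace IsAnti

variable {A : Type*} [PartialOrder A] {X Y : Set (List A)} {x y x₁ x₂ y₁ y₂ : List A}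

theorem eq_of_hig (hX : IsAnti X) (hx : x ∈ X) (hy : y ∈ X) (h : Hig x y) : x = y :=
  by_contra fun hne => hX x hx y hy hne h

theorem eq_of_sublist (hX : IsAnti X) (hx : x ∈ X) (hy : y ∈ X) (h : x <+ y) : x = y :=
  hX.eq_of_hig hx hy (Hig.of_sublist h)

theorem minLength_eq_zero_iff (hX : IsAnti X) (hne : X.Nonempty) : minLength X = 0 ↔ X = {[]} := by
  refine ⟨fun h => ?_, fun h => h ▸ minLength_singleton_nil⟩
  obtain ⟨x, hx, hl⟩ := exists_length_eq_minLength hne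
  rw [h, List.length_eq_zero_iff] at hl
  subst hl
  exact Set.eq_singleton_iff_unique_mem.mpr
    ⟨hx, fun y hy => (hX.eq_of_sublist hx hy (List.nil_sublist y)).symm⟩

theorem append_inj_left (hX : IsAnti X) (hx₁ : x₁ ∈ X) (hx₂ : x₂ ∈ X)
    (h : x₁ ++ y₁ = x₂ ++ y₂) : x₁ = x₂ ∧ y₁ = y₂ := by
  obtain rfl : x₁ = x₂ := by
    rcases List.prefix_or_prefix_of_append_eq_append h with h' | h'
    · exact hX.eq_of_sublist hx₁ hx₂ h'.sublist
    · exact (hX.eq_of_sublist hx₂ hx₁ h'.sublist).symm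
  exact ⟨rfl, List.append_cancel_left h⟩

theorem append_inj_right (hY : IsAnti Y) (hy₁ : y₁ ∈ Y) (hy₂ : y₂ ∈ Y)
    (h : x₁ ++ y₁ = x₂ ++ y₂) : x₁ = x₂ ∧ y₁ = y₂ := by
  obtain rfl : y₁ = y₂ := by
    rcases List.suffix_or_suffix_of_append_eq_append h with h' | h'
    · exact hY.eq_of_sublist hy₁ hy₂ h'.sublist
    · exact (hY.eq_of_sublist hy₂ hy₁ h'.sublist).symm
  exact ⟨List.append_cancel_right h, rfl⟩

/-- An embedding `x₁y₁ ≤ x₂y₂ = w₁w₂` splits as `x₁ ≤ w₁`, `y₁ ≤ w₂`; one of `w₁`, `w₂` is a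
prefix of `x₂` or a suffix of `y₂`, hence squeezed inside the antichain, and comparing lengths
shows that the split is `w₁ = x₂`. -/
protected theorem conc (hX : IsAnti X) (hY : IsAnti Y) : IsAnti (conc X Y) := by
  rintro _ ⟨x₁, hx₁, y₁, hy₁, rfl⟩ _ ⟨x₂, hx₂, y₂, hy₂, rfl⟩ hne h
  obtain ⟨w₁, w₂, hw, h₁, h₂⟩ := h.exists_append_of_append
  apply hne
  rcases List.append_eq_append_iff.mp hw with ⟨m, rfl, rfl⟩ | ⟨m, rfl, rfl⟩
  · obtain rfl : y₁ = m ++ w₂ :=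
      hY.eq_of_hig hy₁ hy₂ (h₂.trans (Hig.of_sublist (List.sublist_append_right m w₂)))
    obtain rfl : m = [] := by
      simpa using h₂.length_le
    rw [List.append_nil] at h₁
    rw [hX.eq_of_hig hx₁ hx₂ h₁]
  · obtain rfl : x₁ = w₁ ++ m :=
      hX.eq_of_hig hx₁ hx₂ (h₁.trans (Hig.of_sublist (List.sublist_append_left w₁ m)))
    obtain rfl : m = [] := by
      simpa using h₁.length_le
    rw [List.nil_append] at h₂
    rw [hY.eq_of_hig hy₁ hy₂ h₂]

theorem conc_ne_singleton_nil (hX : IsAnti X) (hXne : X.Nonempty) (hX₁ : X ≠ {[]})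
    (hYne : Y.Nonempty) : conc X Y ≠ {[]} := by
  intro h
  have hl := congrArg minLength h
  rw [minLength_conc hXne hYne, minLength_singleton_nil] at hl
  exact hX₁ ((hX.minLength_eq_zero_iff hXne).mp (by omega))

theorem foldr_conc {l : List (Set (List A))} (h : ∀ G ∈ l, IsAnti G) :
    IsAnti (l.foldr conc {[]}) := by
  induction l with
  | nil => exact fun x hx y hy hne _ => hne (hx.trans hy.symm)
  | cons G l ih =>
    rw [List.forall_mem_cons] at h
    exact h.1.conc (ih h.2)

end IsAnti

section Equidivisibility

variable {A : Type*} [PartialOrder A] {X₁ Y₁ X₂ Y₂ : Set (List A)}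

theorem eq_of_prefix_of_suffix_of_conc_eq (hU : IsAnti (conc X₁ Y₁))
    (h : conc X₁ Y₁ = conc X₂ Y₂) {x₁ x₂ y₁ y₂ : List A} (hx₁ : x₁ ∈ X₁) (hx₂ : x₂ ∈ X₂)
    (hy₁ : y₁ ∈ Y₁) (hy₂ : y₂ ∈ Y₂) (hx : x₁ <+: x₂) (hy : y₁ <:+ y₂) : x₁ = x₂ ∧ y₁ = y₂ := by
  have heq : x₁ ++ y₁ = x₂ ++ y₂ := hU.eq_of_sublist (append_mem_conc hx₁ hy₁)
    (h ▸ append_mem_conc hx₂ hy₂) (hx.sublist.append hy.sublist)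
  have hl := congrArg List.length heq
  have := hx.length_le
  have := hy.length_le
  simp only [List.length_append] at hl
  exact ⟨hx.eq_of_length (by omega), hy.eq_of_length (by omega)⟩

theorem exists_conc_eq_of_forall_prefix (hX₁ : IsAnti X₁) (hX₂ : IsAnti X₂) (hY₂ : IsAnti Y₂)
    (hX₁ne : X₁.Nonempty) (hY₂ne : Y₂.Nonempty) (h : conc X₁ Y₁ = conc X₂ Y₂)
    (hP : ∀ x₁ ∈ X₁, ∀ y₁ ∈ Y₁, ∀ x₂ ∈ X₂, ∀ y₂ ∈ Y₂, x₁ ++ y₁ = x₂ ++ y₂ → x₁ <+: x₂) :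
    ∃ Z, IsAnti Z ∧ X₂ = conc X₁ Z ∧ Y₁ = conc Z Y₂ := by
  set Z : Set (List A) := {m | (∃ x ∈ X₁, x ++ m ∈ X₂) ∧ ∃ y ∈ Y₂, m ++ y ∈ Y₁}
  have split : ∀ x₁ ∈ X₁, ∀ y₁ ∈ Y₁, ∀ x₂ ∈ X₂, ∀ y₂ ∈ Y₂, x₁ ++ y₁ = x₂ ++ y₂ →
      ∃ m ∈ Z, x₂ = x₁ ++ m ∧ y₁ = m ++ y₂ := by
    intro x₁ hx₁ y₁ hy₁ x₂ hx₂ y₂ hy₂ heq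
    obtain ⟨m, rfl⟩ := hP x₁ hx₁ y₁ hy₁ x₂ hx₂ y₂ hy₂ heq
    obtain rfl : y₁ = m ++ y₂ := List.append_cancel_left (heq.trans (List.append_assoc _ _ _))
    exact ⟨m, ⟨⟨x₁, hx₁, hx₂⟩, y₂, hy₂, hy₁⟩, rfl, rfl⟩
  have left_mem : ∀ x ∈ X₁, ∀ m ∈ Z, x ++ m ∈ X₂ := by
    rintro x hx m ⟨-, y, hy, hmy⟩
    obtain ⟨x₂, hx₂, y₂, hy₂, heq⟩ := h ▸ append_mem_conc hx hmy
    obtain ⟨m', -, rfl, hm'⟩ := split x hx _ hmy x₂ hx₂ y₂ hy₂ heq.symm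
    rwa [(hY₂.append_inj_right hy hy₂ hm').1]
  have right_mem : ∀ y ∈ Y₂, ∀ m ∈ Z, m ++ y ∈ Y₁ := by
    rintro y hy m ⟨⟨x, hx, hxm⟩, -⟩
    obtain ⟨x₁, hx₁, y₁, hy₁, heq⟩ := h.symm ▸ append_mem_conc hxm hy
    obtain ⟨m', -, hm', rfl⟩ := split x₁ hx₁ y₁ hy₁ _ hxm y hy heq
    rwa [(hX₁.append_inj_left hx hx₁ hm').2]
  obtain ⟨x, hx⟩ := hX₁ne
  obtain ⟨y, hy⟩ := hY₂ne
  refine ⟨Z, fun m hm m' hm' hne hig => ?_, ?_, ?_⟩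
  · exact hX₂ _ (left_mem x hx m hm) _ (left_mem x hx m' hm')
      (fun h => hne (List.append_cancel_left h)) (hig.append_left x)
  · refine subset_antisymm (fun x₂ hx₂ => ?_) (Set.image2_subset_iff.mpr left_mem)
    obtain ⟨x₁, hx₁, y₁, hy₁, heq⟩ := h.symm ▸ append_mem_conc hx₂ hy
    obtain ⟨m, hm, rfl, -⟩ := split x₁ hx₁ y₁ hy₁ x₂ hx₂ y hy heq
    exact append_mem_conc hx₁ hm
  · refine subset_antisymm (fun y₁ hy₁ => ?_)
      (Set.image2_subset_iff.mpr fun m hm y hy => right_mem y hy m hm)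
    obtain ⟨x₂, hx₂, y₂, hy₂, heq⟩ := h ▸ append_mem_conc hx hy₁
    obtain ⟨m, hm, -, rfl⟩ := split x hx y₁ hy₁ x₂ hx₂ y₂ hy₂ heq.symm
    exact append_mem_conc hm hy₂

/-- Levi's equidivisibility for products of nonempty antichains. -/
theorem exists_conc_eq_or_conc_eq (hX₁ : IsAnti X₁) (hY₁ : IsAnti Y₁) (hX₂ : IsAnti X₂)
    (hY₂ : IsAnti Y₂) (hX₁ne : X₁.Nonempty) (hY₁ne : Y₁.Nonempty) (hX₂ne : X₂.Nonempty)
    (hY₂ne : Y₂.Nonempty) (h : conc X₁ Y₁ = conc X₂ Y₂) :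
    ∃ Z, IsAnti Z ∧ (X₂ = conc X₁ Z ∧ Y₁ = conc Z Y₂ ∨ X₁ = conc X₂ Z ∧ Y₂ = conc Z Y₁) := by
  by_cases hP : ∀ x₁ ∈ X₁, ∀ y₁ ∈ Y₁, ∀ x₂ ∈ X₂, ∀ y₂ ∈ Y₂, x₁ ++ y₁ = x₂ ++ y₂ → x₁ <+: x₂
  · obtain ⟨Z, hZ, hXZ, hZY⟩ := exists_conc_eq_of_forall_prefix hX₁ hX₂ hY₂ hX₁ne hY₂ne h hP
    exact ⟨Z, hZ, .inl ⟨hXZ, hZY⟩⟩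
  push Not at hP
  obtain ⟨a₁, ha₁, b₁, hb₁, a₂, ha₂, b₂, hb₂, hab, hna⟩ := hP
  have hb : b₁ <:+ b₂ := by
    obtain ⟨t, rfl⟩ := (List.prefix_or_prefix_of_append_eq_append hab).resolve_left hna
    exact ⟨t, by simpa using hab⟩
  -- a single decomposition with `a₂` a proper prefix of `a₁` forbids the opposite direction
  have hP' : ∀ x₂ ∈ X₂, ∀ y₂ ∈ Y₂, ∀ x₁ ∈ X₁, ∀ y₁ ∈ Y₁, x₂ ++ y₂ = x₁ ++ y₁ → x₂ <+: x₁ := by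
    intro x₂ hx₂ y₂ hy₂ x₁ hx₁ y₁ hy₁ heq
    refine (List.prefix_or_prefix_of_append_eq_append heq).resolve_right fun hx => hna ?_
    obtain ⟨-, rfl⟩ := eq_of_prefix_of_suffix_of_conc_eq (hX₁.conc hY₁) h hx₁ hx₂ hb₁ hb₂ hx hb
    exact List.append_cancel_right hab ▸ List.prefix_refl a₁
  obtain ⟨Z, hZ, hXZ, hZY⟩ := exists_conc_eq_of_forall_prefix hX₂ hX₁ hY₁ hX₂ne hY₁ne h.symm hP'
  exact ⟨Z, hZ, .inr ⟨hXZ, hZY⟩⟩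

end Equidivisibility

section Factorization

variable {A : Type*} [PartialOrder A] {Q : Set (List A) → Prop} {G H Z R₁ R₂ : Set (List A)}

/-- Irreducibility in the monoid of nonempty antichains satisfying `Q`: `IrredAnti` is the case
`Q = fun _ => True`, and `IrredFinAnti` is literally `IrredAntiIn Set.Finite`. -/
def IrredAntiIn (Q : Set (List A) → Prop) (U : Set (List A)) : Prop :=
  U ≠ {[]} ∧ ∀ X Y, IsAnti X → Q X → IsAnti Y → Q Y → U = conc X Y → U = X ∨ U = Y

theorem exists_irredAntiIn_factorization {U : Set (List A)} (hU : IsAnti U) (hne : U.Nonempty)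
    (hQU : Q U) : ∃ l : List (Set (List A)),
      (∀ G ∈ l, IsAnti G ∧ G.Nonempty ∧ Q G ∧ IrredAntiIn Q G) ∧ l.foldr conc {[]} = U := by
  induction hn : minLength U using Nat.strong_induction_on generalizing U with
  | _ n ih =>
    by_cases h₁ : U = {[]}
    · exact ⟨[], by simp, h₁.symm⟩
    by_cases hirr : IrredAntiIn Q U
    · exact ⟨[U], by simp [hU, hne, hQU, hirr], conc_singleton_nil U⟩
    obtain ⟨X, Y, hX, hXQ, hY, hYQ, rfl, hUX, hUY⟩ : ∃ X Y, IsAnti X ∧ Q X ∧ IsAnti Y ∧ Q Y ∧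
        U = conc X Y ∧ U ≠ X ∧ U ≠ Y := by
      simpa [IrredAntiIn, h₁] using hirr
    have hXne : X.Nonempty := hne.of_image2_left
    have hYne : Y.Nonempty := hne.of_image2_right
    have hX₀ : minLength X ≠ 0 := fun h => hUY <| by
      rw [(hX.minLength_eq_zero_iff hXne).mp h, singleton_nil_conc]
    have hY₀ : minLength Y ≠ 0 := fun h => hUX <| by
      rw [(hY.minLength_eq_zero_iff hYne).mp h, conc_singleton_nil]
    rw [minLength_conc hXne hYne] at hn
    obtain ⟨lX, hlX, rfl⟩ := ih _ (by omega) hX hXne hXQ rfl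
    obtain ⟨lY, hlY, rfl⟩ := ih _ (by omega) hY hYne hYQ rfl
    exact ⟨lX ++ lY, fun G hG => (List.mem_append.mp hG).elim (hlX G) (hlY G),
      foldr_conc_append lX lY⟩

theorem IrredAntiIn.eq_singleton_nil_of_eq_conc (hH : IrredAntiIn Q H)
    (hQ : ∀ ⦃X Y⦄, X.Nonempty → Q (conc X Y) → Q Y) (hHne : H.Nonempty) (hHQ : Q H)
    (hG : IsAnti G) (hGne : G.Nonempty) (hGQ : Q G) (hG₁ : G ≠ {[]}) (hZ : IsAnti Z)
    (h : H = conc G Z) : Z = {[]} := by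
  have hZne : Z.Nonempty := (h ▸ hHne).of_image2_right
  have hl := congrArg minLength h
  rw [minLength_conc hGne hZne] at hl
  rcases hH.2 G Z hG hGQ hZ (hQ hGne (h ▸ hHQ)) h with rfl | rfl
  · exact (hZ.minLength_eq_zero_iff hZne).mp (by omega)
  · exact absurd ((hG.minLength_eq_zero_iff hGne).mp (by omega)) hG₁

theorem eq_and_eq_of_conc_eq_conc (hQ : ∀ ⦃X Y⦄, X.Nonempty → Q (conc X Y) → Q Y)
    (hG : IsAnti G ∧ G.Nonempty ∧ Q G ∧ IrredAntiIn Q G)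
    (hH : IsAnti H ∧ H.Nonempty ∧ Q H ∧ IrredAntiIn Q H) (hR₁ : IsAnti R₁) (hR₁ne : R₁.Nonempty)
    (hR₂ : IsAnti R₂) (hR₂ne : R₂.Nonempty) (h : conc G R₁ = conc H R₂) : G = H ∧ R₁ = R₂ := by
  obtain ⟨hG, hGne, hGQ, hGirr⟩ := hG
  obtain ⟨hH, hHne, hHQ, hHirr⟩ := hH
  obtain ⟨Z, hZ, ⟨hHGZ, hR⟩ | ⟨hGHZ, hR⟩⟩ :=
    exists_conc_eq_or_conc_eq hG hR₁ hH hR₂ hGne hR₁ne hHne hR₂ne h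
  · obtain rfl := hHirr.eq_singleton_nil_of_eq_conc hQ hHne hHQ hG hGne hGQ hGirr.1 hZ hHGZ
    rw [conc_singleton_nil] at hHGZ
    rw [singleton_nil_conc] at hR
    exact ⟨hHGZ.symm, hR⟩
  · obtain rfl := hGirr.eq_singleton_nil_of_eq_conc hQ hGne hGQ hH hHne hHQ hHirr.1 hZ hGHZ
    rw [conc_singleton_nil] at hGHZ
    rw [singleton_nil_conc] at hR
    exact ⟨hGHZ, hR.symm⟩

theorem eq_of_foldr_conc_eq (hQ : ∀ ⦃X Y⦄, X.Nonempty → Q (conc X Y) → Q Y) :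
    ∀ {l₁ l₂ : List (Set (List A))},
      (∀ G ∈ l₁, IsAnti G ∧ G.Nonempty ∧ Q G ∧ IrredAntiIn Q G) →
      (∀ G ∈ l₂, IsAnti G ∧ G.Nonempty ∧ Q G ∧ IrredAntiIn Q G) →
      l₁.foldr conc {[]} = l₂.foldr conc {[]} → l₁ = l₂
  | [], [], _, _, _ => rfl
  | [], H :: l, _, h₂, h => by
    obtain ⟨⟨hH, hHne, -, hHirr⟩, hl⟩ := List.forall_mem_cons.mp h₂
    exact absurd h.symm <|
      hH.conc_ne_singleton_nil hHne hHirr.1 (nonempty_foldr_conc fun G hG => (hl G hG).2.1)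
  | G :: l, [], h₁, _, h => by
    obtain ⟨⟨hG, hGne, -, hGirr⟩, hl⟩ := List.forall_mem_cons.mp h₁
    exact absurd h <|
      hG.conc_ne_singleton_nil hGne hGirr.1 (nonempty_foldr_conc fun G hG => (hl G hG).2.1)
  | G :: l₁, H :: l₂, h₁, h₂, h => by
    obtain ⟨hG, hl₁⟩ := List.forall_mem_cons.mp h₁
    obtain ⟨hH, hl₂⟩ := List.forall_mem_cons.mp h₂
    obtain ⟨rfl, ht⟩ := eq_and_eq_of_conc_eq_conc hQ hG hH
      (IsAnti.foldr_conc fun G hG => (hl₁ G hG).1) (nonempty_foldr_conc fun G hG => (hl₁ G hG).2.1)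
      (IsAnti.foldr_conc fun G hG => (hl₂ G hG).1) (nonempty_foldr_conc fun G hG => (hl₂ G hG).2.1)
      h
    rw [eq_of_foldr_conc_eq hQ hl₁ hl₂ ht]

theorem existsUnique_irredAntiIn_factorization (hQ : ∀ ⦃X Y⦄, X.Nonempty → Q (conc X Y) → Q Y)
    {U : Set (List A)} (hU : IsAnti U) (hne : U.Nonempty) (hQU : Q U) :
    ∃! l : List (Set (List A)),
      (∀ G ∈ l, IsAnti G ∧ G.Nonempty ∧ Q G ∧ IrredAntiIn Q G) ∧ l.foldr conc {[]} = U := by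
  obtain ⟨l, hl, rfl⟩ := exists_irredAntiIn_factorization hU hne hQU
  exact ⟨l, ⟨hl, rfl⟩, fun l' ⟨hl', h⟩ => eq_of_foldr_conc_eq hQ hl' hl h⟩

end Factorization

/-- The monoids of non-empty antichains and of non-empty finite antichains are free:
unique factorization into irreducibles (neutral element `{□}`). -/
theorem stmt18 {A : Type*} [PartialOrder A] :
    (∀ U : Set (List A), IsAnti U → U.Nonempty →
      ∃! l : List (Set (List A)),
        (∀ G ∈ l, IsAnti G ∧ G.Nonempty ∧ IrredAnti G) ∧
        l.foldr conc ({([] : List A)} : Set (List A)) = U) ∧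
    (∀ U : Set (List A), IsAnti U → U.Nonempty → U.Finite →
      ∃! l : List (Set (List A)),
        (∀ G ∈ l, IsAnti G ∧ G.Nonempty ∧ G.Finite ∧ IrredFinAnti G) ∧
        l.foldr conc ({([] : List A)} : Set (List A)) = U) := by
  refine ⟨fun U hU hne => ?_, fun U hU hne hfin => ?_⟩
  · simpa [IrredAntiIn, IrredAnti] using
      existsUnique_irredAntiIn_factorization (Q := fun _ => True) (fun _ _ _ _ => trivial) hU hne
        trivial
  · exact existsUnique_irredAntiIn_factorization (fun _ _ hX h => h.of_conc_left hX) hU hne hfin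
end
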